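/- arXiv:2002.01413 — 2 statements merged into one kernel-verified Lean document; each statement's English description precedes it below -/
import Mathlib

section
/- Let Y be a real reflexive Banach space, X a nonempty set, and Φ : X × Y → ℝ a function such that for each x ∈ X the functional Φ(x,·) : Y → ℝ is sequentially weakly upper semicontinuous, and such that for some x₀ ∈ X the functional −Φ(x₀,·) is coercive (i.e. lim_{‖y‖→+∞} Φ(x₀,y) = −∞). Then the functional y ↦ inf_{x ∈ X} Φ(x,y) attains its supremum over Y; that is, there exists y* ∈ Y such that inf_{x ∈ X} Φ(x,y) ≤ inf_{x ∈ X} Φ(x,y*) for every y ∈ Y. -/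
/-!
Take a maximizing sequence for `g y = ⨅ x, Φ x y`. Since `g ≤ Φ x₀` and `-Φ x₀` is coercive, it
is eventually bounded. In a reflexive space the weak closure of a bounded set is weakly compact
(Kakutani); the closed span of the sequence is separable, so countably many functionals separate
its points, which makes this weakly compact set metrizable. Hence a subsequence converges weakly,
and as an infimum of sequentially weakly upper semicontinuous functionals, `g` is one too, so the
weak limit is a maximizer.
-/

open Filter Topology Set Bornology NormedSpace TopologicalSpace Function

theorem isBounded_setOf_lt_of_tendsto_atBot {α : Type*} [Bornology α] {f : α → ℝ}
    (hf : Tendsto f (cobounded α) atBot) (c : ℝ) : IsBounded {y | c < f y} := by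
  rw [isBounded_def]
  filter_upwards [hf.eventually_le_atBot c] with y hy using hy.not_gt

theorem IsCompact.isSeqCompact_of_separating {X : Type*} [TopologicalSpace X] {K : Set X}
    (hK : IsCompact K) (f : ℕ → X → ℝ) (hf : ∀ n, Continuous (f n))
    (hsep : ∀ x ∈ K, ∀ y ∈ K, x ≠ y → ∃ n, f n x ≠ f n y) : IsSeqCompact K := by
  have : CompactSpace K := isCompact_iff_compactSpace.mp hK
  have : MetrizableSpace K :=
    Metric.PiNatEmbed.TopologicalSpace.MetrizableSpace.of_countable_separating
      (fun n (x : K) => f n x) (fun n => (hf n).comp continuous_subtype_val)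
      fun x y hxy => hsep x x.2 y y.2 (Subtype.val_injective.ne hxy)
  simpa using (isSeqCompact_univ (X := K)).image continuous_subtype_val.seqContinuous

section Reflexive

variable {E : Type*} [NormedAddCommGroup E] [NormedSpace ℝ E]

theorem exists_seq_dual_separating [SeparableSpace E] :
    ∃ l : ℕ → StrongDual ℝ E, Pairwise fun x y => ∃ n, l n x ≠ l n y := by
  obtain ⟨l, c, hlc⟩ := RCLike.iInter_countable_halfSpaces_eq (𝕜 := ℝ) (s := {(0 : E)})
    (convex_singleton 0) isClosed_singleton
  refine ⟨l, fun x y hxy => ?_⟩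
  have hc : ∀ n, 0 ≤ c n := by
    intro n
    have h0 := hlc.symm ▸ mem_singleton (0 : E)
    simpa using mem_iInter.1 h0 n
  have : x - y ∉ ⋂ n, {z | RCLike.re (l n z) ≤ c n} := by
    rw [hlc]
    exact sub_ne_zero.2 hxy
  simp only [mem_iInter, mem_ofPred_eq, not_forall, not_le, RCLike.re_to_real, map_sub] at this
  obtain ⟨n, hn⟩ := this
  exact ⟨n, fun h => by linarith [hc n]⟩

theorem Submodule.exists_seq_dual_separating {p : Submodule ℝ E} (hp : IsSeparable (p : Set E)) :
    ∃ g : ℕ → StrongDual ℝ E, ∀ x ∈ p, ∀ y ∈ p, x ≠ y → ∃ n, g n x ≠ g n y := by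
  have := hp.separableSpace
  obtain ⟨l, hl⟩ := _root_.exists_seq_dual_separating (E := p)
  choose g hg _ using fun n => exists_extension_norm_eq p (l n)
  refine ⟨g, fun x hx y hy hxy => ?_⟩
  obtain ⟨n, hn⟩ := hl (i := ⟨x, hx⟩) (j := ⟨y, hy⟩) (by simpa using hxy)
  exact ⟨n, by rwa [hg n ⟨x, hx⟩, hg n ⟨y, hy⟩]⟩

theorem continuous_dual_toWeakSpace_symm (f : StrongDual ℝ E) :
    Continuous fun x : WeakSpace ℝ E => f ((toWeakSpace ℝ E).symm x) :=
  WeakBilin.eval_continuous (topDualPairing ℝ E).flip f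

theorem Submodule.isClosed_toWeakSpace_image {p : Submodule ℝ E} (hp : IsClosed (p : Set E)) :
    IsClosed (toWeakSpace ℝ E '' p) := by
  rw [← hp.closure_eq, p.convex.toWeakSpace_closure ℝ]
  exact isClosed_closure

theorem isCompact_closure_toWeakSpace_image_of_surjective
    (hE : Surjective (inclusionInDoubleDual ℝ E)) {s : Set E} (hs : IsBounded s) :
    IsCompact (closure (toWeakSpace ℝ E '' s)) := by
  refine isCompact_closure_of_isBounded ℝ E _
    (by rwa [(toWeakSpace ℝ E).injective.preimage_image]) fun ψ _ => ?_
  obtain ⟨x, hx⟩ := hE (StrongDual.toWeakDual.symm ψ)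
  exact ⟨toWeakSpace ℝ E x, ContinuousLinearMap.ext fun f => congr($hx f)⟩

theorem exists_subseq_tendsto_weakly_of_surjective
    (hE : Surjective (inclusionInDoubleDual ℝ E)) {u : ℕ → E} (hu : IsBounded (range u)) :
    ∃ z : E, ∃ φ : ℕ → ℕ, StrictMono φ ∧
      ∀ f : StrongDual ℝ E, Tendsto (fun n => f (u (φ n))) atTop (𝓝 (f z)) := by
  set S := Submodule.span ℝ (range u)
  set Z := S.topologicalClosure
  set K := closure (toWeakSpace ℝ E '' range u)
  have hKZ : K ⊆ toWeakSpace ℝ E '' Z :=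
    closure_minimal (image_mono <| Submodule.subset_span.trans S.le_topologicalClosure)
      (Submodule.isClosed_toWeakSpace_image S.isClosed_topologicalClosure)
  have hZ : IsSeparable (Z : Set E) := by
    simpa [Z] using ((countable_range u).isSeparable.span (R := ℝ)).closure
  obtain ⟨g, hg⟩ := Submodule.exists_seq_dual_separating hZ
  have hK : IsSeqCompact K :=
    (isCompact_closure_toWeakSpace_image_of_surjective hE hu).isSeqCompact_of_separating
      (fun n x => g n ((toWeakSpace ℝ E).symm x)) (fun n => continuous_dual_toWeakSpace_symm (g n))
      fun x hx y hy hxy => by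
        obtain ⟨x, hxZ, rfl⟩ := hKZ hx
        obtain ⟨y, hyZ, rfl⟩ := hKZ hy
        exact hg x hxZ y hyZ (by rintro rfl; exact hxy rfl)
  obtain ⟨a, -, φ, hφ, ha⟩ := hK fun n => subset_closure (mem_image_of_mem _ (mem_range_self n))
  exact ⟨(toWeakSpace ℝ E).symm a, φ, hφ, fun f =>
    ((continuous_dual_toWeakSpace_symm f).tendsto a).comp ha⟩

def SeqWeakUpperSemicontinuous (g : E → EReal) : Prop :=
  ∀ (u : ℕ → E) (z : E), (∀ f : StrongDual ℝ E, Tendsto (fun n => f (u n)) atTop (𝓝 (f z))) →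
    limsup (fun n => g (u n)) atTop ≤ g z

theorem SeqWeakUpperSemicontinuous.iInf {ι : Sort*} {g : ι → E → EReal}
    (hg : ∀ i, SeqWeakUpperSemicontinuous (g i)) :
    SeqWeakUpperSemicontinuous fun y => ⨅ i, g i y := fun u z hu =>
  le_iInf fun i => (limsup_le_limsup (.of_forall fun _ => iInf_le _ i)).trans (hg i u z hu)

theorem SeqWeakUpperSemicontinuous.exists_forall_le (hE : Surjective (inclusionInDoubleDual ℝ E))
    {g : E → EReal} (hg : SeqWeakUpperSemicontinuous g)
    (hbdd : ∀ c : ℝ, IsBounded {y | (c : EReal) < g y}) : ∃ z, ∀ y, g y ≤ g z := by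
  set M := ⨆ y, g y
  rcases eq_or_ne M ⊥ with hM | hM
  · exact ⟨0, fun y => (le_iSup g y).trans (hM.le.trans bot_le)⟩
  obtain ⟨c, -, hcM⟩ := EReal.exists_between_coe_real (bot_lt_iff_ne_bot.2 hM)
  obtain ⟨a, -, haM, ha⟩ := exists_seq_tendsto_sSup (range_nonempty g) (OrderTop.bddAbove _)
  choose y hy using ha
  rw [sSup_range] at haM
  obtain ⟨N, hN⟩ := eventually_atTop.1 (haM.eventually_const_lt hcM)
  set w := fun n => y (n + N)
  have hwM : Tendsto (fun n => g (w n)) atTop (𝓝 M) := by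
    simpa [w, hy] using (tendsto_add_atTop_iff_nat N).2 haM
  have hw : IsBounded (range w) :=
    (hbdd c).subset (range_subset_iff.2 fun n => by simpa [w, hy] using hN (n + N) le_add_self)
  obtain ⟨z, φ, hφ, hz⟩ := exists_subseq_tendsto_weakly_of_surjective hE hw
  refine ⟨z, fun y' => (le_iSup g y').trans ?_⟩
  calc M = limsup (fun n => g (w (φ n))) atTop := (hwM.comp hφ.tendsto_atTop).limsup_eq.symm
    _ ≤ g z := hg _ z hz

end Reflexive

theorem inf_functional_attains_sup_general
    (Y : Type*) [NormedAddCommGroup Y] [NormedSpace ℝ Y]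
    -- `Y` is reflexive
    (hYrefl : Function.Surjective
      ((NormedSpace.inclusionInDoubleDual ℝ Y) :
        Y → StrongDual ℝ (StrongDual ℝ Y)))
    (X : Type*)
    (Φ : X → Y → ℝ)
    -- each `Φ(x, ·)` is sequentially weakly upper semicontinuous
    (hswusc : ∀ x : X, ∀ (u : ℕ → Y) (y : Y),
      (∀ f : Y →L[ℝ] ℝ, Tendsto (fun n => f (u n)) atTop (𝓝 (f y))) →
      Filter.limsup (fun n => (Φ x (u n) : EReal)) atTop ≤ (Φ x y : EReal))
    -- `-Φ(x₀, ·)` is coercive for some `x₀`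
    (x₀ : X)
    (hcoer₀ : Tendsto (fun y : Y => -Φ x₀ y) (comap norm atTop) atTop) :
    ∃ ys : Y, ∀ y : Y, (⨅ x : X, (Φ x y : EReal)) ≤ ⨅ x : X, (Φ x ys : EReal) := by
  rw [comap_norm_atTop, tendsto_neg_atTop_iff] at hcoer₀
  refine (SeqWeakUpperSemicontinuous.iInf hswusc).exists_forall_le hYrefl fun c => ?_
  exact (isBounded_setOf_lt_of_tendsto_atBot hcoer₀ c).subset fun y hy =>
    EReal.coe_lt_coe_iff.1 (hy.trans_le (iInf_le _ x₀))

/-- If `Y` is a real reflexive Banach space, each `Φ(x, ·)` is sequentially weakly upper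
semicontinuous and `-Φ(x₀, ·)` is coercive for some `x₀`, then `y ↦ inf_{x} Φ(x,y)`
attains its supremum over `Y`. -/
theorem inf_functional_attains_sup
    (Y : Type*) [NormedAddCommGroup Y] [NormedSpace ℝ Y] [CompleteSpace Y]
    -- `Y` is reflexive
    (hYrefl : Function.Surjective
      ((NormedSpace.inclusionInDoubleDual ℝ Y) :
        Y → StrongDual ℝ (StrongDual ℝ Y)))
    (X : Type*) [Nonempty X]
    (Φ : X → Y → ℝ)
    -- each `Φ(x, ·)` is sequentially weakly upper semicontinuous
    (hswusc : ∀ x : X, ∀ (u : ℕ → Y) (y : Y),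
      (∀ f : Y →L[ℝ] ℝ, Tendsto (fun n => f (u n)) atTop (𝓝 (f y))) →
      Filter.limsup (fun n => (Φ x (u n) : EReal)) atTop ≤ (Φ x y : EReal))
    -- `-Φ(x₀, ·)` is coercive for some `x₀`
    (x₀ : X)
    (hcoer₀ : Tendsto (fun y : Y => -Φ x₀ y) (comap norm atTop) atTop) :
    ∃ ys : Y, ∀ y : Y, (⨅ x : X, (Φ x y : EReal)) ≤ ⨅ x : X, (Φ x ys : EReal) :=
  inf_functional_attains_sup_general Y hYrefl X Φ hswusc x₀ hcoer₀
end

section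
/- Let Y be a real Hilbert space and g : Y → ℝ a C¹ function whose gradient g' : Y → Y is Lipschitz continuous with a Lipschitz constant k < 1. Then the functional v ↦ (1/2)‖v‖² + g(v) is strictly convex and coercive. -/
/-!
Split `½‖v‖² + g v` as `(g v + k/2 ‖v‖²) + (1 - k)/2 ‖v‖²`. By Cauchy–Schwarz and the Lipschitz
bound, the derivative of the first summand is a monotone operator, so that summand is convex and
the functional is `(1 - k)`-strongly convex, hence strictly convex. The convex summand lies above
its tangent at `0`, which gives `½‖v‖² + g v ≥ (1 - k)/2 ‖v‖² - ‖∇g 0‖ ‖v‖ + g 0`, hence coercivity.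
-/

open Filter Topology Set InnerProductSpace

section LineRestriction

variable {E : Type*} [AddCommGroup E] [Module ℝ E] {f : E → ℝ}

lemma ConvexOn.comp_line (hf : ConvexOn ℝ univ f) (x v : E) :
    ConvexOn ℝ univ fun t : ℝ => f (x + t • v) := by
  refine ⟨convex_univ, fun s _ t _ a b ha hb hab => ?_⟩
  obtain rfl : b = 1 - a := by linarith
  convert hf.2 (mem_univ (x + s • v)) (mem_univ (x + t • v)) ha hb hab using 2
  simp only [smul_eq_mul]
  module

lemma convexOn_univ_of_comp_line (h : ∀ x v : E, ConvexOn ℝ univ fun t : ℝ => f (x + t • v)) :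
    ConvexOn ℝ univ f := by
  refine ⟨convex_univ, fun x _ y _ a b ha hb hab => ?_⟩
  have := (h y (x - y)).2 (mem_univ 1) (mem_univ 0) ha hb hab
  obtain rfl : b = 1 - a := by linarith
  convert this using 2 <;> simp only [smul_eq_mul] <;> first | module | simp

end LineRestriction

section FirstOrder

variable {E : Type*} [NormedAddCommGroup E] [NormedSpace ℝ E] {f : E → ℝ}

lemma HasFDerivAt.comp_line {f' : E →L[ℝ] ℝ} {x v : E} {t : ℝ}
    (hf : HasFDerivAt f f' (x + t • v)) : HasDerivAt (fun s : ℝ => f (x + s • v)) (f' v) t := by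
  have hline : HasDerivAt (fun s : ℝ => x + s • v) v t := by
    simpa using ((hasDerivAt_id t).smul_const v).const_add x
  exact hf.comp_hasDerivAt t hline

lemma convexOn_univ_of_monotone_fderiv {f' : E → E →L[ℝ] ℝ} (hf : ∀ x, HasFDerivAt f (f' x) x)
    (hmono : ∀ x y, 0 ≤ (f' x - f' y) (x - y)) : ConvexOn ℝ univ f := by
  refine convexOn_univ_of_comp_line fun x v => ?_
  have hderiv (t : ℝ) := (hf (x + t • v)).comp_line
  refine Monotone.convexOn_univ_of_deriv (fun t => (hderiv t).differentiableAt) ?_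
  intro s t hst
  rw [(hderiv s).deriv, (hderiv t).deriv, ← sub_nonneg, ← sub_apply]
  have hdiff : (x + t • v) - (x + s • v) = (t - s) • v := by module
  have := hmono (x + t • v) (x + s • v)
  rw [hdiff, map_smul, smul_eq_mul] at this
  rcases hst.eq_or_lt with rfl | hlt
  · simp
  · exact nonneg_of_mul_nonneg_right (by linarith) (sub_pos.2 hlt)

lemma ConvexOn.add_fderiv_le {f' : E →L[ℝ] ℝ} {x : E} (hfc : ConvexOn ℝ univ f)
    (hf : HasFDerivAt f f' x) (y : E) : f x + f' (y - x) ≤ f y := by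
  have hderiv : HasDerivAt (fun t : ℝ => f (x + t • (y - x))) (f' (y - x)) 0 :=
    HasFDerivAt.comp_line (by simpa using hf)
  have := (hfc.comp_line x (y - x)).le_slope_of_hasDerivAt (mem_univ 0) (mem_univ 1)
    zero_lt_one hderiv
  simp only [slope_def_field, zero_smul, one_smul, add_zero, sub_zero, div_one,
    add_sub_cancel] at this
  linarith

end FirstOrder

lemma tendsto_comap_norm_atTop_of_quadratic_le {E : Type*} [Norm E] {F : E → ℝ} {a b c : ℝ}
    (ha : 0 < a) (hF : ∀ v, a * ‖v‖ ^ 2 - b * ‖v‖ + c ≤ F v) :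
    Tendsto F (comap norm atTop) atTop := by
  have hquad : Tendsto (fun r : ℝ => a * r ^ 2 - b * r + c) atTop atTop := by
    refine tendsto_atTop_add_const_right _ c ?_
    have hfactor : (fun r : ℝ => a * r ^ 2 - b * r) = fun r => r * (a * r - b) := by
      funext r; ring
    rw [hfactor]
    exact tendsto_id.atTop_mul_atTop₀
      (tendsto_atTop_add_const_right _ _ (tendsto_id.const_mul_atTop ha))
  exact tendsto_atTop_mono hF (hquad.comp tendsto_comap)

section Hilbert

variable {Y : Type*} [NormedAddCommGroup Y] [InnerProductSpace ℝ Y] [CompleteSpace Y]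
  {g : Y → ℝ}

lemma HasGradientAt.add_const_mul_norm_sq {g' x : Y} (hg : HasGradientAt g g' x) (c : ℝ) :
    HasGradientAt (fun v => g v + c * ‖v‖ ^ 2) (g' + (2 * c) • x) x := by
  rw [hasGradientAt_iff_hasFDerivAt]
  refine (hg.hasFDerivAt.add
    ((hasStrictFDerivAt_norm_sq x).hasFDerivAt.const_mul c)).congr_fderiv ?_
  ext v
  simp only [add_apply, toDual_apply_apply, smul_apply, coe_innerSL_apply, nsmul_eq_mul,
    Nat.cast_ofNat, smul_eq_mul, map_add, map_smul, add_right_inj]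
  ring

lemma LipschitzWith.convexOn_add_mul_norm_sq_of_gradient {k : NNReal} (hg : Differentiable ℝ g)
    (hLip : LipschitzWith k (gradient g)) : ConvexOn ℝ univ fun v => g v + k / 2 * ‖v‖ ^ 2 := by
  refine convexOn_univ_of_monotone_fderiv
    (fun x => ((hg x).hasGradientAt.add_const_mul_norm_sq _).hasFDerivAt) fun x y => ?_
  have hsplit : (gradient g x + (2 * (k / 2 : ℝ)) • x) - (gradient g y + (2 * (k / 2 : ℝ)) • y) =
      (gradient g x - gradient g y) + (k : ℝ) • (x - y) := by module
  rw [sub_apply, toDual_apply_apply, toDual_apply_apply, ← inner_sub_left, hsplit, inner_add_left,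
    real_inner_smul_left, real_inner_self_eq_norm_sq]
  have hLip' : ‖gradient g x - gradient g y‖ * ‖x - y‖ ≤ k * ‖x - y‖ ^ 2 := by
    rw [sq, ← mul_assoc]
    gcongr
    exact hLip.norm_sub_le x y
  linarith [neg_le_of_abs_le (abs_real_inner_le_norm (gradient g x - gradient g y) (x - y))]

end Hilbert

/-- If `g : Y → ℝ` is `C¹` on a real Hilbert space and its gradient is Lipschitz with
constant `k < 1`, then `v ↦ ½‖v‖² + g(v)` is strictly convex and coercive. -/
theorem strictConvex_and_coercive_of_gradient_lipschitz
    (Y : Type*) [NormedAddCommGroup Y] [InnerProductSpace ℝ Y] [CompleteSpace Y]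
    (g : Y → ℝ)
    (hC1 : ContDiff ℝ 1 g)
    (k : NNReal) (hk : (k : ℝ) < 1)
    (hLip : LipschitzWith k (gradient g)) :
    StrictConvexOn ℝ Set.univ (fun v : Y => (1 / 2 : ℝ) * ‖v‖ ^ 2 + g v) ∧
    Tendsto (fun v : Y => (1 / 2 : ℝ) * ‖v‖ ^ 2 + g v) (comap norm atTop) atTop := by
  have hg : Differentiable ℝ g := hC1.differentiable one_ne_zero
  have hconv := hLip.convexOn_add_mul_norm_sq_of_gradient hg
  constructor
  · have hstrong : StrongConvexOn univ (1 - k) fun v : Y => (1 / 2 : ℝ) * ‖v‖ ^ 2 + g v :=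
      strongConvexOn_iff_convex.2 (by convert hconv using 2; ring)
    exact hstrong.strictConvexOn (sub_pos.2 hk)
  · refine tendsto_comap_norm_atTop_of_quadratic_le (a := (1 - k) / 2) (b := ‖gradient g 0‖)
      (c := g 0) (by linarith) fun v => ?_
    have htangent :=
      hconv.add_fderiv_le ((hg 0).hasGradientAt.add_const_mul_norm_sq _).hasFDerivAt v
    rw [toDual_apply_apply, smul_zero, add_zero, sub_zero, norm_zero] at htangent
    linarith [neg_le_of_abs_le (abs_real_inner_le_norm (gradient g 0) v)]
end
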